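/- Let 0 < p < ∞, p ≠ 2, and suppose x, y are n×n complex matrices satisfying ‖x+y‖_p^p = ‖x−y‖_p^p = ‖x‖_p^p + ‖y‖_p^p (Schatten p-norms). Then x and y are disjoint: x*y = 0 and x y* = 0. -/

import Mathlib

open Matrix

/-- The real power `a ^ r` of a matrix, defined via the continuous functional calculus
(for Hermitian/positive semidefinite matrices). -/
noncomputable def mpow {ι : Type*} [Fintype ι] [DecidableEq ι]
    (a : Matrix ι ι ℂ) (r : ℝ) : Matrix ι ι ℂ :=
  cfc (fun t : ℝ => t ^ r) a

/-- `Tr |x|^p = Tr ((xᴴx)^(p/2))`, the `p`-th power of the Schatten `p`-norm. -/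
noncomputable def schattenPow {ι : Type*} [Fintype ι] [DecidableEq ι]
    (p : ℝ) (x : Matrix ι ι ℂ) : ℝ :=
  ((mpow (xᴴ * x) (p / 2)).trace).re

section Auxiliary

open Finset
open scoped ComplexOrder
set_option linter.unusedSectionVars false
set_option maxHeartbeats 1000000

variable {ι κ : Type*} [Fintype ι] [DecidableEq ι] [Fintype κ] [DecidableEq κ]


lemma trace_cfc'' (A : Matrix ι ι ℂ) (hA : A.IsHermitian) (f : ℝ → ℝ) :
    (cfc f A).trace = ∑ i, (f (hA.eigenvalues i) : ℂ) := by
  rw [hA.cfc_eq, Matrix.IsHermitian.cfc, Unitary.conjStarAlgAut_apply, Matrix.trace_mul_cycle]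
  rw [show (star (hA.eigenvectorUnitary : Matrix ι ι ℂ)) * (hA.eigenvectorUnitary : Matrix ι ι ℂ)
      = 1 from Matrix.mem_unitaryGroup_iff'.mp hA.eigenvectorUnitary.2]
  rw [one_mul, Matrix.trace_diagonal]
  rfl

lemma conj_pow_eq (U V D : Matrix ι ι ℂ) (hUV : U * V = 1) (hVU : V * U = 1) (m : ℕ) :
    (U * D * V) ^ m = U * D ^ m * V := by
  induction m with
  | zero => simp [hUV]
  | succ k ih =>
      rw [pow_succ, ih, pow_succ]
      calc U * D ^ k * V * (U * D * V) = U * D ^ k * (V * U) * D * V := by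
            noncomm_ring
        _ = U * (D ^ k * D) * V := by rw [hVU]; noncomm_ring

lemma trace_pow_re (A : Matrix ι ι ℂ) (hA : A.IsHermitian) (m : ℕ) :
    ((A ^ m).trace).re = ∑ i, hA.eigenvalues i ^ m := by
  have h1 : (A ^ m).trace = ∑ i, ((hA.eigenvalues i : ℂ)) ^ m := by
    conv_lhs => rw [hA.spectral_theorem, Unitary.conjStarAlgAut_apply]
    rw [conj_pow_eq _ _ _ (Matrix.mem_unitaryGroup_iff.mp hA.eigenvectorUnitary.2)
      (Matrix.mem_unitaryGroup_iff'.mp hA.eigenvectorUnitary.2)]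
    rw [Matrix.trace_mul_cycle,
      show (star (hA.eigenvectorUnitary : Matrix ι ι ℂ)) * (hA.eigenvectorUnitary : Matrix ι ι ℂ)
      = 1 from Matrix.mem_unitaryGroup_iff'.mp hA.eigenvectorUnitary.2, one_mul]
    rw [Matrix.diagonal_pow, Matrix.trace_diagonal]
    simp
  rw [h1]
  simp [← Complex.ofReal_pow]

lemma pow_conjTranspose_mul (z : Matrix κ ι ℂ) (m : ℕ) :
    (zᴴ * z) ^ (m + 1) = zᴴ * (z * zᴴ) ^ m * z := by
  induction m with
  | zero => simp
  | succ k ih =>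
      rw [pow_succ, ih, pow_succ]
      simp only [Matrix.mul_assoc]

lemma trace_pow_conjTranspose_mul (z : Matrix κ ι ℂ) (m : ℕ) :
    ((zᴴ * z) ^ (m + 1)).trace = ((z * zᴴ) ^ (m + 1)).trace := by
  rw [pow_conjTranspose_mul, Matrix.trace_mul_cycle, ← pow_succ']

lemma trace_fromBlocks' (P : Matrix ι ι ℂ) (Q : Matrix κ κ ℂ) (R S) :
    (Matrix.fromBlocks P R S Q).trace = P.trace + Q.trace := by
  simp [Matrix.trace, Fintype.sum_sum_type, Matrix.diag]

lemma fromBlocks_diag_pow (P : Matrix ι ι ℂ) (Q : Matrix κ κ ℂ) (m : ℕ) :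
    (Matrix.fromBlocks P 0 0 Q) ^ m = Matrix.fromBlocks (P ^ m) 0 0 (Q ^ m) := by
  induction m with
  | zero => simp [pow_zero, Matrix.fromBlocks_one]
  | succ k ih => rw [pow_succ, ih, pow_succ, Matrix.fromBlocks_multiply]; simp [← pow_succ]

lemma posSemidef_diag_re_nonneg {P : Matrix ι ι ℂ} (hP : P.PosSemidef) (i : ι) :
    0 ≤ (P i i).re := by
  have h := hP.dotProduct_mulVec_nonneg (Pi.single i 1)
  have : (star (Pi.single i 1) ⬝ᵥ P.mulVec (Pi.single i 1)) = P i i := by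
    simp only [Matrix.mulVec_single, dotProduct, Pi.star_apply, Pi.single_apply,
      mul_one]
    rw [Finset.sum_eq_single i (fun b _ hb => by simp [hb]) (by simp)]
    simp
  rw [this] at h
  exact (Complex.le_def.mp h).1

lemma eq_zero_of_trace_conjTranspose_mul_self {Z : Matrix ι ι ℂ}
    (h : ((Zᴴ * Z).trace).re = 0) : Z = 0 := by
  have h1 : ((Zᴴ * Z).trace).re = ∑ j, ∑ i, Complex.normSq (Z i j) := by
    simp only [Matrix.trace, Matrix.diag, Matrix.mul_apply, Matrix.conjTranspose_apply]
    rw [Complex.re_sum]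
    congr 1; ext j
    rw [Complex.re_sum]
    congr 1; ext i
    simp [Complex.normSq_apply, Complex.normSq_eq_conj_mul_self, Complex.mul_conj']
  rw [h1] at h
  ext i j
  have := (Finset.sum_eq_zero_iff_of_nonneg (fun j _ => Finset.sum_nonneg
    (fun i _ => Complex.normSq_nonneg _))).mp h j (Finset.mem_univ j)
  have := (Finset.sum_eq_zero_iff_of_nonneg (fun i _ => Complex.normSq_nonneg _)).mp this i
    (Finset.mem_univ i)
  simpa using Complex.normSq_eq_zero.mp this


lemma sum_decomp {ι : Type*} [Fintype ι] (a : ι → ℝ) (S : Finset ℝ) (h0 : (0:ℝ) ∉ S)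
    (hmem : ∀ i, a i ≠ 0 → a i ∈ S) (g : ℝ → ℝ) (hg : g 0 = 0) :
    ∑ i, g (a i) = ∑ v ∈ S, ((Finset.univ.filter (fun i => a i = v)).card : ℝ) * g v := by
  classical
  have hmaps : ∀ i ∈ Finset.univ (α := ι), a i ∈ insert (0:ℝ) S := by
    intro i _
    by_cases h : a i = 0
    · simp [h]
    · exact Finset.mem_insert_of_mem (hmem i h)
  have h1 := Finset.sum_fiberwise_of_maps_to hmaps (fun i => g (a i))
  rw [← h1, Finset.sum_insert h0]
  have hz : ∑ i ∈ Finset.univ.filter (fun i => a i = (0:ℝ)), g (a i) = 0 := by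
    apply Finset.sum_eq_zero
    intro i hi
    rw [(Finset.mem_filter.mp hi).2, hg]
  rw [hz, zero_add]
  apply Finset.sum_congr rfl
  intro v hv
  have : ∑ i ∈ Finset.univ.filter (fun i => a i = v), g (a i)
      = ∑ _i ∈ Finset.univ.filter (fun i => a i = v), g v := by
    apply Finset.sum_congr rfl
    intro i hi
    rw [(Finset.mem_filter.mp hi).2]
  rw [this, Finset.sum_const, nsmul_eq_mul]

lemma sum_f_eq_of_powsum {ι₁ ι₂ : Type*} [Fintype ι₁] [Fintype ι₂] (a : ι₁ → ℝ) (b : ι₂ → ℝ)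
    (ha : ∀ i, 0 ≤ a i) (hb : ∀ j, 0 ≤ b j)
    (hpow : ∀ m : ℕ, ∑ i, a i ^ (m+1) = ∑ j, b j ^ (m+1))
    (f : ℝ → ℝ) (hf : f 0 = 0) : ∑ i, f (a i) = ∑ j, f (b j) := by
  classical
  set S : Finset ℝ := ((Finset.univ.image a) ∪ (Finset.univ.image b)).filter (fun v => 0 < v)
    with hS
  have h0S : (0:ℝ) ∉ S := by simp [hS]
  have hamem : ∀ i, a i ≠ 0 → a i ∈ S := by
    intro i hi
    simp only [hS, Finset.mem_filter, Finset.mem_union, Finset.mem_image]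
    exact ⟨Or.inl ⟨i, Finset.mem_univ i, rfl⟩, lt_of_le_of_ne (ha i) (Ne.symm hi)⟩
  have hbmem : ∀ j, b j ≠ 0 → b j ∈ S := by
    intro j hj
    simp only [hS, Finset.mem_filter, Finset.mem_union, Finset.mem_image]
    exact ⟨Or.inr ⟨j, Finset.mem_univ j, rfl⟩, lt_of_le_of_ne (hb j) (Ne.symm hj)⟩
  -- counts
  set ca : ℝ → ℝ := fun v => ((Finset.univ.filter (fun i => a i = v)).card : ℝ) with hca
  set cb : ℝ → ℝ := fun v => ((Finset.univ.filter (fun j => b j = v)).card : ℝ) with hcb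
  have hsys : ∀ m : ℕ, ∑ v ∈ S, (ca v - cb v) * v ^ (m+1) = 0 := by
    intro m
    have h1 := sum_decomp a S h0S hamem (fun t => t ^ (m+1)) (by simp)
    have h2 := sum_decomp b S h0S hbmem (fun t => t ^ (m+1)) (by simp)
    have := hpow m
    rw [h1, h2] at this
    rw [← sub_eq_zero] at this
    rw [← this, ← Finset.sum_sub_distrib]
    congr 1; ext v; ring
  -- Vandermonde
  set r := S.card with hr
  set e := S.orderIsoOfFin hr.symm with he
  set v : Fin r → ℝ := fun k => (e k : ℝ) with hv
  have hvS : ∀ k, v k ∈ S := fun k => (e k).2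
  have hvpos : ∀ k, 0 < v k := by
    intro k
    have := hvS k
    simp only [hS, Finset.mem_filter] at this
    exact this.2
  have hvinj : Function.Injective v := by
    intro k l h
    have : (e k : ℝ) = (e l : ℝ) := h
    exact e.injective (Subtype.ext this)
  have hsum_fin : ∀ F : ℝ → ℝ, ∑ w ∈ S, F w = ∑ k, F (v k) := by
    intro F
    rw [← Finset.sum_attach S F]
    exact (Equiv.sum_comp e.toEquiv (fun w => F (w : ℝ))).symm
  set c : Fin r → ℝ := fun k => ca (v k) - cb (v k) with hc
  set G : Matrix (Fin r) (Fin r) ℝ := Matrix.of (fun mk k => v k ^ ((mk : ℕ)+1)) with hG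
  have hGc : G.mulVec c = 0 := by
    funext m
    have := hsys ((m : ℕ))
    rw [hsum_fin (fun w => (ca w - cb w) * w ^ ((m:ℕ)+1))] at this
    simp only [Matrix.mulVec, dotProduct, hG, Matrix.of_apply, Pi.zero_apply]
    rw [← this]
    congr 1; ext k
    simp [hc]; ring
  have hdet : G.det ≠ 0 := by
    have hGt : G = (Matrix.diagonal v * Matrix.vandermonde v)ᵀ := by
      ext mk k
      simp [hG, Matrix.vandermonde, Matrix.mul_apply, Matrix.diagonal, Matrix.transpose_apply,
        Finset.sum_ite_eq, pow_succ']
    rw [hGt, Matrix.det_transpose, Matrix.det_mul, Matrix.det_diagonal]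
    apply mul_ne_zero
    · exact Finset.prod_ne_zero_iff.mpr (fun k _ => (hvpos k).ne')
    · rw [Ne, Matrix.det_vandermonde_eq_zero_iff]
      rintro ⟨i, j, hij, hne⟩
      exact hne (hvinj hij)
  have hcz : c = 0 := by
    have hinv : G⁻¹ *ᵥ (G *ᵥ c) = c := by
      rw [Matrix.mulVec_mulVec, Matrix.nonsing_inv_mul G (isUnit_iff_ne_zero.mpr hdet),
        Matrix.one_mulVec]
    rw [hGc, Matrix.mulVec_zero] at hinv
    exact hinv.symm
  have hcount : ∀ w ∈ S, ca w = cb w := by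
    intro w hw
    have hk : v (e.symm ⟨w, hw⟩) = w := by simp [hv]
    have := congrFun hcz (e.symm ⟨w, hw⟩)
    simp only [hc, Pi.zero_apply] at this
    rw [hk] at this
    linarith
  rw [sum_decomp a S h0S hamem f hf, sum_decomp b S h0S hbmem f hf]
  apply Finset.sum_congr rfl
  intro w hw
  rw [show ((Finset.univ.filter (fun i => a i = w)).card : ℝ) = ca w from rfl, hcount w hw]


lemma peierls (M : Matrix ι ι ℂ) (hM : M.PosSemidef)
    (V : Matrix ι ι ℂ) (hV : V ∈ Matrix.unitaryGroup ι ℂ) (f : ℝ → ℝ)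
    (hf : ConvexOn ℝ (Set.Ici 0) f) :
    (∑ i, f (((Vᴴ * M * V) i i).re) ≤ ∑ i, f (hM.1.eigenvalues i)) ∧
    (StrictConvexOn ℝ (Set.Ici 0) f →
      (∑ i, f (((Vᴴ * M * V) i i).re) = ∑ i, f (hM.1.eigenvalues i)) →
      Vᴴ * M * V = Matrix.diagonal (fun i => ((((Vᴴ * M * V) i i).re : ℝ) : ℂ))) := by
  classical
  set lam : ι → ℝ := hM.1.eigenvalues with hlam
  set U : Matrix ι ι ℂ := (hM.1.eigenvectorUnitary : Matrix ι ι ℂ) with hU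
  have hUU : U * Uᴴ = 1 := by
    rw [← Matrix.star_eq_conjTranspose]
    exact Matrix.mem_unitaryGroup_iff.mp hM.1.eigenvectorUnitary.2
  have hUU' : Uᴴ * U = 1 := by
    rw [← Matrix.star_eq_conjTranspose]
    exact Matrix.mem_unitaryGroup_iff'.mp hM.1.eigenvectorUnitary.2
  have hVV : V * Vᴴ = 1 := by
    rw [← Matrix.star_eq_conjTranspose]; exact Matrix.mem_unitaryGroup_iff.mp hV
  have hVV' : Vᴴ * V = 1 := by
    rw [← Matrix.star_eq_conjTranspose]; exact Matrix.mem_unitaryGroup_iff'.mp hV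
  set W : Matrix ι ι ℂ := Uᴴ * V with hW
  set D : Matrix ι ι ℂ := Matrix.diagonal (fun j => ((lam j : ℝ) : ℂ)) with hD
  have hspec : M = U * D * Uᴴ := by
    rw [← Matrix.star_eq_conjTranspose]
    exact hM.1.spectral_theorem.trans (Unitary.conjStarAlgAut_apply _ _)
  have hWH : Wᴴ = Vᴴ * U := by
    rw [hW, Matrix.conjTranspose_mul, Matrix.conjTranspose_conjTranspose]
  have hrep : Vᴴ * M * V = Wᴴ * D * W := by
    rw [hspec, hWH, hW]
    simp only [Matrix.mul_assoc]
  have hWW : Wᴴ * W = 1 := by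
    rw [hWH, hW]
    calc Vᴴ * U * (Uᴴ * V) = Vᴴ * (U * Uᴴ) * V := by simp only [Matrix.mul_assoc]
      _ = 1 := by rw [hUU, Matrix.mul_one, hVV']
  have hWW' : W * Wᴴ = 1 := by
    rw [hWH, hW]
    calc Uᴴ * V * (Vᴴ * U) = Uᴴ * (V * Vᴴ) * U := by simp only [Matrix.mul_assoc]
      _ = 1 := by rw [hVV, Matrix.mul_one, hUU']
  set w : ι → ι → ℝ := fun i j => Complex.normSq (W j i) with hw
  set d : ι → ℝ := fun i => ((Vᴴ * M * V) i i).re with hd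
  have hentry : ∀ i, (Vᴴ * M * V) i i = ((∑ j, w i j * lam j : ℝ) : ℂ) := by
    intro i
    rw [hrep, Matrix.mul_assoc, Matrix.mul_apply]
    have hterm : ∀ b, Wᴴ i b * (D * W) b i = ((w i b * lam b : ℝ) : ℂ) := by
      intro b
      rw [hD, Matrix.diagonal_mul, Matrix.conjTranspose_apply]
      push_cast
      rw [Complex.normSq_eq_conj_mul_self, Complex.star_def]
      ring
    rw [Finset.sum_congr rfl (fun b _ => hterm b)]
    norm_cast
  have hdval : ∀ i, d i = ∑ j, w i j * lam j := by
    intro i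
    rw [hd]
    simp only [hentry i, Complex.ofReal_re]
  have hrow : ∀ i, ∑ j, w i j = 1 := by
    intro i
    have h1 : (Wᴴ * W) i i = 1 := by rw [hWW]; simp
    rw [Matrix.mul_apply] at h1
    have h2 : ∀ j, Wᴴ i j * W j i = ((w i j : ℝ) : ℂ) := by
      intro j
      simp only [Matrix.conjTranspose_apply, hw]
      rw [Complex.normSq_eq_conj_mul_self, Complex.star_def]
    rw [Finset.sum_congr rfl (fun j _ => h2 j)] at h1
    have : ((∑ j, w i j : ℝ) : ℂ) = ((1:ℝ):ℂ) := by push_cast; rw [← h1]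
    exact_mod_cast this
  have hcol : ∀ j, ∑ i, w i j = 1 := by
    intro j
    have h1 : (W * Wᴴ) j j = 1 := by rw [hWW']; simp
    rw [Matrix.mul_apply] at h1
    have h2 : ∀ i, W j i * Wᴴ i j = ((w i j : ℝ) : ℂ) := by
      intro i
      simp only [Matrix.conjTranspose_apply, hw]
      rw [Complex.normSq_eq_conj_mul_self, Complex.star_def]
      ring
    rw [Finset.sum_congr rfl (fun i _ => h2 i)] at h1
    have : ((∑ i, w i j : ℝ) : ℂ) = ((1:ℝ):ℂ) := by push_cast; rw [← h1]
    exact_mod_cast this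
  have hwnn : ∀ i j, 0 ≤ w i j := fun i j => Complex.normSq_nonneg _
  have hmem : ∀ j ∈ Finset.univ (α := ι), lam j ∈ Set.Ici (0:ℝ) :=
    fun j _ => hM.eigenvalues_nonneg j
  have hjensen : ∀ i, f (d i) ≤ ∑ j, w i j * f (lam j) := by
    intro i
    have := hf.map_sum_le (t := Finset.univ) (w := w i) (p := lam)
      (fun j _ => hwnn i j) (hrow i) hmem
    simp only [smul_eq_mul] at this
    calc f (d i) = f (∑ j, w i j * lam j) := by rw [hdval i]
      _ ≤ ∑ j, w i j * f (lam j) := this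
  have hsumRHS : ∑ i, ∑ j, w i j * f (lam j) = ∑ j, f (lam j) := by
    rw [Finset.sum_comm]
    apply Finset.sum_congr rfl
    intro j _
    rw [← Finset.sum_mul, hcol j, one_mul]
  have hineq : ∑ i, f (d i) ≤ ∑ i, f (lam i) := by
    calc ∑ i, f (d i) ≤ ∑ i, ∑ j, w i j * f (lam j) := Finset.sum_le_sum (fun i _ => hjensen i)
      _ = ∑ j, f (lam j) := hsumRHS
  refine ⟨hineq, ?_⟩
  intro hsc heq
  have hterm : ∀ i ∈ Finset.univ (α := ι), f (d i) = ∑ j, w i j * f (lam j) := by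
    apply (Finset.sum_eq_sum_iff_of_le (fun i _ => hjensen i)).mp
    rw [heq, ← hsumRHS] at *
  have hlamd : ∀ i j, w i j ≠ 0 → lam j = d i := by
    intro i j hne
    have h1 := (hsc.map_sum_eq_iff' (w := w i) (p := lam) (t := Finset.univ)
      (fun j _ => hwnn i j) (hrow i) hmem)
    have h2 : f (∑ j, w i j • lam j) = ∑ j, w i j • f (lam j) := by
      simp only [smul_eq_mul]
      rw [← hdval i]
      exact hterm i (Finset.mem_univ i)
    have h3 := h1.mp h2 j (Finset.mem_univ j) hne
    rw [h3]
    simp only [smul_eq_mul]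
    exact (hdval i).symm
  have hdiagstep : D * W = W * Matrix.diagonal (fun i => ((d i : ℝ) : ℂ)) := by
    ext j i
    rw [Matrix.diagonal_mul, Matrix.mul_diagonal]
    by_cases h0 : W j i = 0
    · rw [h0]; ring
    · have hwne : w i j ≠ 0 := by
        simp only [hw]
        exact fun hcon => h0 (Complex.normSq_eq_zero.mp hcon)
      rw [show lam j = d i from hlamd i j hwne]
      ring
  have hVMV : Vᴴ * M * V = Matrix.diagonal (fun i => ((d i : ℝ) : ℂ)) := by
    rw [hrep, Matrix.mul_assoc, hdiagstep, ← Matrix.mul_assoc, hWW, Matrix.one_mul]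
  rw [hVMV]
  congr 1
  funext i
  simp [Matrix.diagonal_apply_eq, Complex.ofReal_re]

lemma diag_conj_unitary_eq {N : Matrix ι ι ℂ} (hN : N.PosSemidef) :
    (hN.1.eigenvectorUnitary : Matrix ι ι ℂ)ᴴ * N * (hN.1.eigenvectorUnitary : Matrix ι ι ℂ)
      = Matrix.diagonal (fun i => ((hN.1.eigenvalues i : ℝ) : ℂ)) := by
  rw [← Matrix.star_eq_conjTranspose]
  have := hN.1.conjStarAlgAut_star_eigenvectorUnitary
  simp only [Unitary.conjStarAlgAut_apply, Unitary.coe_star, star_star] at this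
  exact this

lemma pinch_chain (M₁ M₂ N : Matrix ι ι ℂ) (h₁ : M₁.PosSemidef) (h₂ : M₂.PosSemidef)
    (hN : N.PosSemidef) (hsum : N + N = M₁ + M₂) (f : ℝ → ℝ) (hf : ConvexOn ℝ (Set.Ici 0) f) :
    ((∑ i, f (hN.1.eigenvalues i)) + (∑ i, f (hN.1.eigenvalues i)) ≤
      (∑ i, f (h₁.1.eigenvalues i)) + (∑ i, f (h₂.1.eigenvalues i))) ∧
    (StrictConvexOn ℝ (Set.Ici 0) f →
      (∑ i, f (h₂.1.eigenvalues i)) = (∑ i, f (h₁.1.eigenvalues i)) →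
      (∑ i, f (hN.1.eigenvalues i)) = (∑ i, f (h₁.1.eigenvalues i)) →
      M₁ = M₂) := by
  classical
  set V : Matrix ι ι ℂ := (hN.1.eigenvectorUnitary : Matrix ι ι ℂ) with hV
  have hVmem : V ∈ Matrix.unitaryGroup ι ℂ := hN.1.eigenvectorUnitary.2
  have hVV : V * Vᴴ = 1 := by
    rw [← Matrix.star_eq_conjTranspose]; exact Matrix.mem_unitaryGroup_iff.mp hVmem
  set lam : ι → ℝ := hN.1.eigenvalues with hlam
  set d₁ : ι → ℝ := fun i => ((Vᴴ * M₁ * V) i i).re with hd₁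
  set d₂ : ι → ℝ := fun i => ((Vᴴ * M₂ * V) i i).re with hd₂
  have hdiag : Vᴴ * N * V = Matrix.diagonal (fun i => ((lam i : ℝ) : ℂ)) :=
    diag_conj_unitary_eq hN
  have hsplit : ∀ i, lam i + lam i = d₁ i + d₂ i := by
    intro i
    have h0 : Vᴴ * N * V + Vᴴ * N * V = Vᴴ * M₁ * V + Vᴴ * M₂ * V := by
      calc Vᴴ * N * V + Vᴴ * N * V = Vᴴ * (N + N) * V := by noncomm_ring
        _ = Vᴴ * (M₁ + M₂) * V := by rw [hsum]
        _ = Vᴴ * M₁ * V + Vᴴ * M₂ * V := by noncomm_ring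
    have h1 := congrArg (fun X => (X i i).re) h0
    simp only [Matrix.add_apply, Complex.add_re] at h1
    rw [hdiag] at h1
    simpa [Matrix.diagonal_apply_eq, Complex.ofReal_re] using h1
  have hd₁nn : ∀ i, 0 ≤ d₁ i := fun i =>
    posSemidef_diag_re_nonneg (h₁.conjTranspose_mul_mul_same V) i
  have hd₂nn : ∀ i, 0 ≤ d₂ i := fun i =>
    posSemidef_diag_re_nonneg (h₂.conjTranspose_mul_mul_same V) i
  have hlameq : ∀ i, lam i = (1/2 : ℝ) * d₁ i + (1/2 : ℝ) * d₂ i := by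
    intro i
    have := hsplit i
    linarith
  have hmid : ∀ i, f (lam i) + f (lam i) ≤ f (d₁ i) + f (d₂ i) := by
    intro i
    have h := hf.2 (Set.mem_Ici.mpr (hd₁nn i)) (Set.mem_Ici.mpr (hd₂nn i))
      (by norm_num : (0:ℝ) ≤ 1/2) (by norm_num : (0:ℝ) ≤ 1/2) (by norm_num)
    simp only [smul_eq_mul] at h
    rw [← hlameq i] at h
    linarith
  have hp₁ := peierls M₁ h₁ V hVmem f hf
  have hp₂ := peierls M₂ h₂ V hVmem f hf
  have hchain : (∑ i, f (lam i)) + (∑ i, f (lam i)) ≤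
      (∑ i, f (d₁ i)) + (∑ i, f (d₂ i)) := by
    rw [← Finset.sum_add_distrib, ← Finset.sum_add_distrib]
    exact Finset.sum_le_sum (fun i _ => hmid i)
  constructor
  · calc (∑ i, f (lam i)) + (∑ i, f (lam i)) ≤ (∑ i, f (d₁ i)) + (∑ i, f (d₂ i)) := hchain
      _ ≤ _ := add_le_add hp₁.1 hp₂.1
  · intro hsc hM₂₁ hNM₁
    have hb₁ : ∑ i, f (d₁ i) = ∑ i, f (h₁.1.eigenvalues i) := by
      have := hp₁.1; have := hp₂.1
      linarith [hchain]
    have hb₂ : ∑ i, f (d₂ i) = ∑ i, f (h₂.1.eigenvalues i) := by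
      have := hp₁.1; have := hp₂.1
      linarith [hchain]
    have hD₁ := hp₁.2 hsc hb₁
    have hD₂ := hp₂.2 hsc hb₂
    have htermsum : ∑ i, (f (lam i) + f (lam i)) = ∑ i, (f (d₁ i) + f (d₂ i)) := by
      rw [Finset.sum_add_distrib, Finset.sum_add_distrib]
      have := hp₁.1; have := hp₂.1
      linarith [hchain]
    have hterm := (Finset.sum_eq_sum_iff_of_le (fun i _ => hmid i)).mp htermsum
    have hdd : ∀ i, d₁ i = d₂ i := by
      intro i
      by_contra hne
      have h := hsc.2 (Set.mem_Ici.mpr (hd₁nn i)) (Set.mem_Ici.mpr (hd₂nn i)) hne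
        (by norm_num : (0:ℝ) < 1/2) (by norm_num : (0:ℝ) < 1/2) (by norm_num)
      simp only [smul_eq_mul] at h
      rw [← hlameq i] at h
      have := hterm i (Finset.mem_univ i)
      linarith
    have hMM : Vᴴ * M₁ * V = Vᴴ * M₂ * V := by
      have hfun : (fun i => ((((Vᴴ * M₁ * V) i i).re : ℝ) : ℂ))
          = (fun i => ((((Vᴴ * M₂ * V) i i).re : ℝ) : ℂ)) := by
        funext i
        exact_mod_cast hdd i
      rw [hD₁, hD₂, hfun]
    calc M₁ = (V * Vᴴ) * M₁ * (V * Vᴴ) := by rw [hVV]; simp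
      _ = V * (Vᴴ * M₁ * V) * Vᴴ := by noncomm_ring
      _ = V * (Vᴴ * M₂ * V) * Vᴴ := by rw [hMM]
      _ = (V * Vᴴ) * M₂ * (V * Vᴴ) := by noncomm_ring
      _ = M₂ := by rw [hVV]; simp

lemma eigsum_eq_of_trace_pow {P : Matrix ι ι ℂ} {Q : Matrix κ κ ℂ}
    (hP : P.PosSemidef) (hQ : Q.PosSemidef)
    (htr : ∀ m : ℕ, ((P ^ (m+1)).trace) = ((Q ^ (m+1)).trace))
    (f : ℝ → ℝ) (hf0 : f 0 = 0) :
    ∑ i, f (hP.1.eigenvalues i) = ∑ j, f (hQ.1.eigenvalues j) :=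
  sum_f_eq_of_powsum _ _ hP.eigenvalues_nonneg hQ.eigenvalues_nonneg
    (fun m => by
      rw [← trace_pow_re P hP.1 (m+1), ← trace_pow_re Q hQ.1 (m+1), htr m]) f hf0

lemma schattenPow_eq {n : ℕ} (p : ℝ) (z : Matrix (Fin n) (Fin n) ℂ) :
    schattenPow p z
      = ∑ i, ((Matrix.posSemidef_conjTranspose_mul_self z).1.eigenvalues i) ^ (p/2) := by
  unfold schattenPow mpow
  rw [trace_cfc'' _ (Matrix.posSemidef_conjTranspose_mul_self z).1]
  rw [Complex.re_sum]
  simp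

lemma schattenPow_conjT {n : ℕ} {p : ℝ} (hp : p ≠ 0) (z : Matrix (Fin n) (Fin n) ℂ) :
    schattenPow p zᴴ = schattenPow p z := by
  rw [schattenPow_eq, schattenPow_eq]
  exact eigsum_eq_of_trace_pow (Matrix.posSemidef_conjTranspose_mul_self zᴴ)
    (Matrix.posSemidef_conjTranspose_mul_self z)
    (fun m => by
      rw [show (zᴴᴴ * zᴴ) = z * zᴴ from by rw [conjTranspose_conjTranspose]]
      exact (trace_pow_conjTranspose_mul z m).symm)
    (fun t => t ^ (p/2)) (Real.zero_rpow (div_ne_zero hp two_ne_zero))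

open scoped MatrixOrder in
lemma key_disjoint {n : ℕ} {p : ℝ} (hp0 : 0 < p) (hp2 : p ≠ 2)
    (x y : Matrix (Fin n) (Fin n) ℂ)
    (h1 : schattenPow p (x + y) = schattenPow p x + schattenPow p y)
    (h2 : schattenPow p (x - y) = schattenPow p x + schattenPow p y) :
    x * yᴴ = 0 := by
  classical
  have hq0 : 0 < p/2 := by linarith
  have hq1 : p/2 ≠ 1 := fun h => hp2 (by linarith [(div_eq_one_iff_eq (two_ne_zero' ℝ)).mp h])
  set f : ℝ → ℝ := fun t => t ^ (p/2) with hfdef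
  have hf0 : f 0 = 0 := Real.zero_rpow hq0.ne'
  obtain ⟨g, hgsc, c, hgf⟩ : ∃ g : ℝ → ℝ, StrictConvexOn ℝ (Set.Ici 0) g ∧
      ∃ c : ℝ, ∀ t, g t = c * f t := by
    rcases lt_or_gt_of_ne hq1 with h | h
    · exact ⟨-f, (Real.strictConcaveOn_rpow hq0 h).neg, -1, fun t => by simp⟩
    · exact ⟨f, strictConvexOn_rpow h, 1, fun t => by simp⟩
  have hg0 : g 0 = 0 := by rw [hgf 0, hf0, mul_zero]
  -- positive semidefinite players
  have hA : (xᴴ * x).PosSemidef := Matrix.posSemidef_conjTranspose_mul_self x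
  have hB : (yᴴ * y).PosSemidef := Matrix.posSemidef_conjTranspose_mul_self y
  have hAB : (xᴴ * x + yᴴ * y).PosSemidef := hA.add hB
  have hMp : ((x+y)ᴴ * (x+y)).PosSemidef := Matrix.posSemidef_conjTranspose_mul_self (x+y)
  have hMm : ((x-y)ᴴ * (x-y)).PosSemidef := Matrix.posSemidef_conjTranspose_mul_self (x-y)
  set sA := CFC.sqrt (xᴴ * x) with hsAdef
  set sB := CFC.sqrt (yᴴ * y) with hsBdef
  have hsA : sA * sA = xᴴ * x := CFC.sqrt_mul_sqrt_self _ hA.nonneg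
  have hsB : sB * sB = yᴴ * y := CFC.sqrt_mul_sqrt_self _ hB.nonneg
  have hsAH : sAᴴ = sA := (CFC.sqrt_nonneg _).isSelfAdjoint
  have hsBH : sBᴴ = sB := (CFC.sqrt_nonneg _).isSelfAdjoint
  set W : Matrix (Fin n ⊕ Fin n) (Fin n ⊕ Fin n) ℂ := Matrix.fromBlocks sA sB 0 0 with hWdef
  have hWH : Wᴴ = Matrix.fromBlocks sA 0 sB 0 := by
    rw [hWdef, Matrix.fromBlocks_conjTranspose]
    congr 1 <;> simp [hsAH, hsBH]
  have hM : (Wᴴ * W).PosSemidef := Matrix.posSemidef_conjTranspose_mul_self W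
  have hMblocks : Wᴴ * W = Matrix.fromBlocks (xᴴ*x) (sA*sB) (sB*sA) (yᴴ*y) := by
    rw [hWH, hWdef, Matrix.fromBlocks_multiply]
    simp [hsA, hsB]
  have hWWH : W * Wᴴ = Matrix.fromBlocks (xᴴ*x + yᴴ*y) 0 0 0 := by
    rw [hWH, hWdef, Matrix.fromBlocks_multiply]
    simp [hsA, hsB]
  set U : Matrix (Fin n ⊕ Fin n) (Fin n ⊕ Fin n) ℂ :=
    Matrix.fromBlocks 1 0 0 (-1) with hUdef
  have hUH : Uᴴ = U := by
    rw [hUdef, Matrix.fromBlocks_conjTranspose]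
    simp
  have hUU : U * U = 1 := by
    rw [hUdef, Matrix.fromBlocks_multiply, ← Matrix.fromBlocks_one]
    congr 1 <;> simp
  have hM' : (U * (Wᴴ * W) * U).PosSemidef := by
    have := hM.mul_mul_conjTranspose_same U
    rwa [hUH] at this
  have hM'blocks : U * (Wᴴ * W) * U
      = Matrix.fromBlocks (xᴴ*x) (-(sA*sB)) (-(sB*sA)) (yᴴ*y) := by
    rw [hMblocks, hUdef, Matrix.fromBlocks_multiply, Matrix.fromBlocks_multiply]
    simp
  set Z : Matrix (Fin n ⊕ Fin n) (Fin n ⊕ Fin n) ℂ := Matrix.fromBlocks x 0 0 y with hZdef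
  have hN : (Zᴴ * Z).PosSemidef := Matrix.posSemidef_conjTranspose_mul_self Z
  have hNblocks : Zᴴ * Z = Matrix.fromBlocks (xᴴ*x) 0 0 (yᴴ*y) := by
    rw [hZdef, Matrix.fromBlocks_conjTranspose, Matrix.fromBlocks_multiply]
    simp
  have hNsum : Zᴴ * Z + Zᴴ * Z = Wᴴ * W + U * (Wᴴ * W) * U := by
    rw [hNblocks, hM'blocks, hMblocks, Matrix.fromBlocks_add, Matrix.fromBlocks_add]
    congr 1 <;> simp
  -- trace identities
  have t1 : ∀ m : ℕ, ((Wᴴ * W) ^ (m+1)).trace = ((xᴴ*x + yᴴ*y) ^ (m+1)).trace := by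
    intro m
    rw [trace_pow_conjTranspose_mul W m, hWWH, fromBlocks_diag_pow, trace_fromBlocks',
      zero_pow (Nat.succ_ne_zero m), Matrix.trace_zero, add_zero]
  have t2 : ∀ m : ℕ, ((U * (Wᴴ * W) * U) ^ (m+1)).trace = ((Wᴴ * W) ^ (m+1)).trace := by
    intro m
    rw [conj_pow_eq U U (Wᴴ * W) hUU hUU (m+1), Matrix.trace_mul_cycle, hUU,
      Matrix.one_mul]
  have t3 : ∀ m : ℕ, ((Zᴴ * Z) ^ (m+1)).trace
      = ((xᴴ*x) ^ (m+1)).trace + ((yᴴ*y) ^ (m+1)).trace := by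
    intro m
    rw [hNblocks, fromBlocks_diag_pow, trace_fromBlocks']
  -- eigenvalue sum identities
  have eM : ∑ i, g (hM.1.eigenvalues i) = ∑ i, g (hAB.1.eigenvalues i) :=
    eigsum_eq_of_trace_pow hM hAB t1 g hg0
  have eM' : ∑ i, g (hM'.1.eigenvalues i) = ∑ i, g (hM.1.eigenvalues i) :=
    eigsum_eq_of_trace_pow hM' hM t2 g hg0
  have eN : ∑ i, g (hN.1.eigenvalues i)
      = (∑ i, g (hA.1.eigenvalues i)) + (∑ i, g (hB.1.eigenvalues i)) := by
    have := sum_f_eq_of_powsum (hN.1.eigenvalues)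
      (Sum.elim hA.1.eigenvalues hB.1.eigenvalues)
      hN.eigenvalues_nonneg
      (fun j => by cases j with
        | inl a => exact hA.eigenvalues_nonneg a
        | inr b => exact hB.eigenvalues_nonneg b)
      (fun m => by
        rw [← trace_pow_re _ hN.1 (m+1), t3 m]
        rw [Fintype.sum_sum_type]
        simp only [Sum.elim_inl, Sum.elim_inr]
        rw [← trace_pow_re _ hA.1 (m+1), ← trace_pow_re _ hB.1 (m+1), Complex.add_re])
      g hg0
    rw [this, Fintype.sum_sum_type]
    simp
  -- transfer the hypotheses to g-sums
  have hgsum : ∀ z : Matrix (Fin n) (Fin n) ℂ,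
      ∑ i, g ((Matrix.posSemidef_conjTranspose_mul_self z).1.eigenvalues i)
        = c * schattenPow p z := by
    intro z
    rw [schattenPow_eq, Finset.mul_sum]
    exact Finset.sum_congr rfl (fun i _ => hgf _)
  have hg1 : ∑ i, g (hMp.1.eigenvalues i)
      = (∑ i, g (hA.1.eigenvalues i)) + (∑ i, g (hB.1.eigenvalues i)) := by
    rw [show ∑ i, g (hMp.1.eigenvalues i) = c * schattenPow p (x+y) from hgsum (x+y),
      show ∑ i, g (hA.1.eigenvalues i) = c * schattenPow p x from hgsum x,
      show ∑ i, g (hB.1.eigenvalues i) = c * schattenPow p y from hgsum y, h1, mul_add]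
  have hg2 : ∑ i, g (hMm.1.eigenvalues i)
      = (∑ i, g (hA.1.eigenvalues i)) + (∑ i, g (hB.1.eigenvalues i)) := by
    rw [show ∑ i, g (hMm.1.eigenvalues i) = c * schattenPow p (x-y) from hgsum (x-y),
      show ∑ i, g (hA.1.eigenvalues i) = c * schattenPow p x from hgsum x,
      show ∑ i, g (hB.1.eigenvalues i) = c * schattenPow p y from hgsum y, h2, mul_add]
  -- the two inequalities
  have hKsum : (xᴴ*x + yᴴ*y) + (xᴴ*x + yᴴ*y) = ((x+y)ᴴ * (x+y)) + ((x-y)ᴴ * (x-y)) := by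
    rw [Matrix.conjTranspose_add, Matrix.conjTranspose_sub]
    noncomm_ring
  have step1 := (pinch_chain _ _ _ hMp hMm hAB hKsum g hgsc.convexOn).1
  have step2 := (pinch_chain _ _ _ hM hM' hN hNsum g hgsc.convexOn).1
  have heqq : ∑ i, g (hN.1.eigenvalues i) = ∑ i, g (hM.1.eigenvalues i) := by
    rw [eN]
    linarith [step1, step2, eM, eM', hg1, hg2, eN]
  have hMM' := (pinch_chain _ _ _ hM hM' hN hNsum g hgsc.convexOn).2 hgsc eM' heqq
  -- extract the off-diagonal block
  have hblocks : Matrix.fromBlocks (xᴴ*x) (sA*sB) (sB*sA) (yᴴ*y)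
      = Matrix.fromBlocks (xᴴ*x) (-(sA*sB)) (-(sB*sA)) (yᴴ*y) := by
    rw [← hMblocks, ← hM'blocks]
    exact hMM'
  have hoff : sA * sB = -(sA * sB) := by
    have := congrArg Matrix.toBlocks₁₂ hblocks
    simpa [Matrix.toBlocks_fromBlocks₁₂] using this
  have hzero : sA * sB = 0 := by
    ext i j
    have h := congrFun (congrFun (congrArg (fun (T : Matrix (Fin n) (Fin n) ℂ) => (T : Matrix (Fin n) (Fin n) ℂ)) hoff) i) j
    have h' : (sA * sB) i j = -((sA * sB) i j) := by
      simpa [Matrix.neg_apply] using h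
    have h2 : (2 : ℂ) * (sA * sB) i j = 0 := by
      have : (sA * sB) i j + (sA * sB) i j = 0 := by
        nth_rewrite 2 [h']
        ring
      linear_combination this
    have := mul_eq_zero.mp h2
    simpa using this
  have hABzero : (xᴴ*x) * (yᴴ*y) = 0 := by
    rw [← hsA, ← hsB, show sA * sA * (sB * sB) = sA * (sA * sB) * sB from by noncomm_ring,
      hzero]
    simp
  -- conclude
  have htr0 : (((x*yᴴ)ᴴ * (x*yᴴ)).trace).re = 0 := by
    rw [Matrix.conjTranspose_mul, Matrix.conjTranspose_conjTranspose]
    rw [show y * xᴴ * (x * yᴴ) = y * ((xᴴ*x) * yᴴ) from by noncomm_ring,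
      Matrix.trace_mul_comm,
      show (xᴴ*x) * yᴴ * y = (xᴴ*x) * (yᴴ*y) from by noncomm_ring,
      hABzero, Matrix.trace_zero]
    simp
  exact eq_zero_of_trace_conjTranspose_mul_self htr0

end Auxiliary

/-- If `0 < p < ∞`, `p ≠ 2` and `‖x+y‖_p^p = ‖x−y‖_p^p = ‖x‖_p^p + ‖y‖_p^p` for the
Schatten `p`-norms, then `x` and `y` are disjoint: `xᴴ y = 0` and `x yᴴ = 0`. -/
theorem disjoint_of_norm_add_sub_eq {n : ℕ} {p : ℝ} (hp0 : 0 < p) (hp2 : p ≠ 2)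
    (x y : Matrix (Fin n) (Fin n) ℂ)
    (h1 : schattenPow p (x + y) = schattenPow p x + schattenPow p y)
    (h2 : schattenPow p (x - y) = schattenPow p x + schattenPow p y) :
    xᴴ * y = 0 ∧ x * yᴴ = 0 := by
  have hp0' : p ≠ 0 := hp0.ne'
  have hxy : x * yᴴ = 0 := key_disjoint hp0 hp2 x y h1 h2
  have h1' : schattenPow p (xᴴ + yᴴ) = schattenPow p xᴴ + schattenPow p yᴴ := by
    rw [← Matrix.conjTranspose_add, schattenPow_conjT hp0', schattenPow_conjT hp0',
      schattenPow_conjT hp0', h1]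
  have h2' : schattenPow p (xᴴ - yᴴ) = schattenPow p xᴴ + schattenPow p yᴴ := by
    rw [← Matrix.conjTranspose_sub, schattenPow_conjT hp0', schattenPow_conjT hp0',
      schattenPow_conjT hp0', h2]
  have hxy' := key_disjoint hp0 hp2 xᴴ yᴴ h1' h2'
  rw [Matrix.conjTranspose_conjTranspose] at hxy'
  exact ⟨hxy', hxy⟩
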